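/- Let x \in \R^d have descending order statistics x_{[1]} \ge ... \ge x_{[d]} with ranking indices j_1,...,j_d, and let y be a k-subset in utility class C_{h,t} (head {j_1,...,j_h}, tail j_t). Then min over v \in OPT^{-1}(y) of \|x - v\|_\infty equals (x_{[h+1]} - x_{[t]})/2, where OPT^{-1}(y) is the set of vectors v \in \R^d whose k largest coordinates occur exactly at the indices in y. (Assume all coordinates of x are distinct for well-definedness of the ranking.) -/

import Mathlib

open Finset

/-- Canonical loss formula: with `x ∈ ℝ^d` having distinct coordinates sorted in
decreasing order by the permutation `j` (so `x_{[r]} = x (j (r-1))` 0-based), and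
`y` a `k`-subset in utility class `C_{h,t}` (i.e. `h` is the largest integer `< k`
with `{j_1,…,j_h} ⊆ y` and `j_{h+1} ∉ y`, and `j_t` is the element of `y` of
largest rank), the infimum of `‖x - v‖_∞` over
`OPT⁻¹(y) = {v : min_{i∈y} v_i > max_{i∉y} v_i}` equals `(x_{[h+1]} - x_{[t]})/2`. -/
theorem canonical_loss_formula (d k h t : ℕ) (hk : 1 ≤ k) (hkd : k < d)
    (x : Fin d → ℝ) (hx : Function.Injective x)
    (j : Equiv.Perm (Fin d)) (hsort : ∀ a b : Fin d, a < b → x (j b) < x (j a))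
    (y : Finset (Fin d)) (hycard : y.card = k)
    (hh : h < k) (hhd : h < d) (ht : k ≤ t) (htd : t ≤ d) (ht1 : t - 1 < d)
    (hhead : ∀ a : Fin d, (a : ℕ) < h → j a ∈ y) (hhnot : j ⟨h, hhd⟩ ∉ y)
    (htail : j ⟨t - 1, ht1⟩ ∈ y) (htmax : ∀ a : Fin d, t - 1 < (a : ℕ) → j a ∉ y) :
    sInf {c : ℝ | ∃ v : Fin d → ℝ, (∀ i ∈ y, ∀ i' ∉ y, v i' < v i) ∧
        c = ⨆ i : Fin d, |x i - v i|} =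
      (x (j ⟨h, hhd⟩) - x (j ⟨t - 1, ht1⟩)) / 2 := by
  have hd0 : 0 < d := by omega
  haveI : Nonempty (Fin d) := ⟨⟨0, hd0⟩⟩
  set a := x (j ⟨h, hhd⟩) with ha
  set b := x (j ⟨t - 1, ht1⟩) with hb
  set S : Set ℝ := {c : ℝ | ∃ v : Fin d → ℝ, (∀ i ∈ y, ∀ i' ∉ y, v i' < v i) ∧
        c = ⨆ i : Fin d, |x i - v i|} with hS
  -- h < t - 1
  have hht : h < t - 1 := by
    have hle : h ≤ t - 1 := by omega
    rcases lt_or_eq_of_le hle with h' | h'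
    · exact h'
    · exfalso
      apply hhnot
      have : (⟨h, hhd⟩ : Fin d) = ⟨t - 1, ht1⟩ := Fin.ext h'
      rw [this]; exact htail
  have hab : b < a := hsort ⟨h, hhd⟩ ⟨t - 1, ht1⟩ (by simpa [Fin.lt_def] using hht)
  -- bounds on coordinates
  have hyb : ∀ i ∈ y, b ≤ x i := by
    intro i hi
    have h1 : (j.symm i : ℕ) ≤ t - 1 := by
      by_contra hc
      exact htmax (j.symm i) (lt_of_not_ge hc) (by simpa using hi)
    rcases lt_or_eq_of_le h1 with h2 | h2
    · have := hsort (j.symm i) ⟨t - 1, ht1⟩ (by simpa [Fin.lt_def] using h2)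
      simpa using this.le
    · have he : j.symm i = (⟨t - 1, ht1⟩ : Fin d) := Fin.ext h2
      have : x (j (j.symm i)) = b := by rw [he]
      simpa using this.ge
  have hny : ∀ i, i ∉ y → x i ≤ a := by
    intro i hi
    have h1 : h ≤ (j.symm i : ℕ) := by
      by_contra hc
      exact hi (by simpa using hhead (j.symm i) (lt_of_not_ge hc))
    rcases lt_or_eq_of_le h1 with h2 | h2
    · have := hsort ⟨h, hhd⟩ (j.symm i) (by simpa [Fin.lt_def] using h2)
      simpa using this.le
    · have he : (⟨h, hhd⟩ : Fin d) = j.symm i := Fin.ext h2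
      have : x (j (j.symm i)) = a := by rw [← he]
      simpa using this.le
  -- lower bound on all members of S
  have lb : ∀ c ∈ S, (a - b) / 2 ≤ c := by
    rintro c ⟨v, hv, rfl⟩
    have hbdd : BddAbove (Set.range fun i => |x i - v i|) :=
      Set.Finite.bddAbove (Set.finite_range _)
    have h1 : |x (j ⟨h, hhd⟩) - v (j ⟨h, hhd⟩)| ≤ ⨆ i : Fin d, |x i - v i| :=
      le_ciSup hbdd _
    have h2 : |x (j ⟨t - 1, ht1⟩) - v (j ⟨t - 1, ht1⟩)| ≤ ⨆ i : Fin d, |x i - v i| :=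
      le_ciSup hbdd _
    have h3 : v (j ⟨h, hhd⟩) < v (j ⟨t - 1, ht1⟩) := hv _ htail _ hhnot
    have h4 : a - v (j ⟨h, hhd⟩) ≤ |x (j ⟨h, hhd⟩) - v (j ⟨h, hhd⟩)| := le_abs_self _
    have h5 : v (j ⟨t - 1, ht1⟩) - b ≤ |x (j ⟨t - 1, ht1⟩) - v (j ⟨t - 1, ht1⟩)| :=
      (neg_le_abs _).trans_eq' (by rw [hb]; ring_nf)
    linarith
  -- near-optimal members of S
  have key : ∀ δ : ℝ, 0 < δ → ∃ c ∈ S, c ≤ (a - b) / 2 + δ := by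
    intro δ hδ
    set m : ℝ := (a + b) / 2 with hm
    set v : Fin d → ℝ := fun i => if i ∈ y then max (x i) (m + δ) else min (x i) (m - δ)
      with hv
    refine ⟨⨆ i : Fin d, |x i - v i|, ⟨v, ?_, rfl⟩, ?_⟩
    · intro i hi i' hi'
      have h1 : v i' ≤ m - δ := by simp [hv, hi', min_le_right]
      have h2 : m + δ ≤ v i := by simp [hv, hi, le_max_right]
      linarith
    · apply ciSup_le
      intro i
      rw [abs_le]
      by_cases hi : i ∈ y
      · have hvi : v i = max (x i) (m + δ) := by simp [hv, hi]
        have hb' : b ≤ x i := hyb i hi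
        constructor
        · rcases le_total (x i) (m + δ) with h' | h'
          · rw [hvi, max_eq_right h']; simp [hm]; linarith
          · rw [hvi, max_eq_left h']; linarith
        · have : x i ≤ v i := hvi ▸ le_max_left _ _
          linarith
      · have hvi : v i = min (x i) (m - δ) := by simp [hv, hi]
        have ha' : x i ≤ a := hny i hi
        constructor
        · have : v i ≤ x i := hvi ▸ min_le_left _ _
          linarith
        · rcases le_total (x i) (m - δ) with h' | h'
          · rw [hvi, min_eq_left h']; linarith
          · rw [hvi, min_eq_right h']; simp [hm]; linarith
  obtain ⟨c0, hc0S, hc0⟩ := key 1 one_pos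
  have hbddS : BddBelow S := ⟨(a - b) / 2, lb⟩
  apply le_antisymm
  · apply le_of_forall_pos_le_add
    intro ε hε
    obtain ⟨c, hcS, hc⟩ := key ε hε
    exact (csInf_le hbddS hcS).trans hc
  · exact le_csInf ⟨c0, hc0S⟩ lb
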